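/- For a smooth function f on the circle (or line), f(α)·Λf(α) − (1/2)·Λ(f²)(α) ≥ 0 pointwise, where Λ = (−Δ)^{1/2}. -/
import Mathlib


open Real MeasureTheory Filter Topology

/-- Córdoba–Córdoba pointwise inequality on the circle: for smooth periodic `f`,
`f(α)·Λf(α) − (1/2)·Λ(f²)(α) ≥ 0`, where `Λ = (−Δ)^{1/2}` is given by the
principal-value integral `Λf(α) = (1/(4π)) PV ∫_𝕋 (f(α) − f(α−β))/sin²(β/2) dβ`. -/
theorem cordoba_cordoba_pointwise (f : ℝ → ℝ) (hf : ContDiff ℝ (⊤ : ℕ∞) f)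
    (hper : Function.Periodic f (2 * Real.pi)) (α : ℝ) (Lf Lf2 : ℝ)
    (hLf : Tendsto (fun ε : ℝ =>
        (1 / (4 * Real.pi)) * ∫ β in Set.Ioo (-Real.pi) Real.pi \ Set.Ioo (-ε) ε,
          (f α - f (α - β)) / (Real.sin (β / 2)) ^ 2)
      (nhdsWithin 0 (Set.Ioi 0)) (nhds Lf))
    (hLf2 : Tendsto (fun ε : ℝ =>
        (1 / (4 * Real.pi)) * ∫ β in Set.Ioo (-Real.pi) Real.pi \ Set.Ioo (-ε) ε,
          ((f α) ^ 2 - (f (α - β)) ^ 2) / (Real.sin (β / 2)) ^ 2)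
      (nhdsWithin 0 (Set.Ioi 0)) (nhds Lf2)) :
    0 ≤ f α * Lf - (1 / 2) * Lf2 := by
  have hc : Continuous f := hf.continuous
  have hcpos : (0:ℝ) < 1 / (4 * Real.pi) := by positivity
  -- the combined quantity tends to the target
  have hT : Tendsto (fun ε : ℝ =>
      f α * ((1 / (4 * Real.pi)) * ∫ β in Set.Ioo (-Real.pi) Real.pi \ Set.Ioo (-ε) ε,
          (f α - f (α - β)) / (Real.sin (β / 2)) ^ 2)
      - (1 / 2) * ((1 / (4 * Real.pi)) * ∫ β in Set.Ioo (-Real.pi) Real.pi \ Set.Ioo (-ε) ε,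
          ((f α) ^ 2 - (f (α - β)) ^ 2) / (Real.sin (β / 2)) ^ 2))
      (nhdsWithin 0 (Set.Ioi 0)) (nhds (f α * Lf - (1 / 2) * Lf2)) :=
    (hLf.const_mul (f α)).sub (hLf2.const_mul (1 / 2))
  refine ge_of_tendsto hT ?_
  filter_upwards [Ioo_mem_nhdsGT_of_mem (show (0:ℝ) ∈ Set.Ico 0 Real.pi from
    ⟨le_refl 0, Real.pi_pos⟩)] with ε hε
  obtain ⟨hε0, hεπ⟩ := hε
  set S : Set ℝ := Set.Ioo (-Real.pi) Real.pi \ Set.Ioo (-ε) ε with hS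
  set K : Set ℝ := Set.Icc (-Real.pi) Real.pi \ Set.Ioo (-ε) ε with hK
  have hSK : S ⊆ K := Set.diff_subset_diff_left Set.Ioo_subset_Icc_self
  have hKc : IsCompact K := isCompact_Icc.diff isOpen_Ioo
  have hsne : ∀ β ∈ K, (Real.sin (β / 2)) ^ 2 ≠ 0 := by
    intro β hβ
    have h1 : -Real.pi ≤ β := hβ.1.1
    have h2 : β ≤ Real.pi := hβ.1.2
    have h3 : β ∉ Set.Ioo (-ε) ε := hβ.2
    have hβ0 : β ≠ 0 := by
      intro h; exact h3 (by simp [h, hε0])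
    have : Real.sin (β / 2) ≠ 0 := by
      intro h
      have := (Real.sin_eq_zero_iff_of_lt_of_lt
        (by linarith [Real.pi_pos] : -Real.pi < β / 2)
        (by linarith [Real.pi_pos] : β / 2 < Real.pi)).mp h
      exact hβ0 (by linarith)
    exact pow_ne_zero 2 this
  have hcont1 : ContinuousOn (fun β => (f α - f (α - β)) / (Real.sin (β / 2)) ^ 2) K :=
    ((continuous_const.sub (hc.comp (continuous_const.sub continuous_id))).continuousOn).div
      (((Real.continuous_sin.comp (continuous_id.div_const 2)).pow 2).continuousOn) hsne
  have hcont2 : ContinuousOn (fun β => ((f α) ^ 2 - (f (α - β)) ^ 2) / (Real.sin (β / 2)) ^ 2) K :=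
    ((continuous_const.sub ((hc.comp (continuous_const.sub continuous_id)).pow 2)).continuousOn).div
      (((Real.continuous_sin.comp (continuous_id.div_const 2)).pow 2).continuousOn) hsne
  have hint1 : IntegrableOn (fun β => (f α - f (α - β)) / (Real.sin (β / 2)) ^ 2) S volume :=
    (hcont1.integrableOn_compact hKc).mono_set hSK
  have hint2 : IntegrableOn (fun β => ((f α) ^ 2 - (f (α - β)) ^ 2) / (Real.sin (β / 2)) ^ 2)
      S volume :=
    (hcont2.integrableOn_compact hKc).mono_set hSK
  have hSmeas : MeasurableSet S := measurableSet_Ioo.diff measurableSet_Ioo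
  have h0 : 0 ≤ ∫ β in S,
      (f α * ((f α - f (α - β)) / (Real.sin (β / 2)) ^ 2)
        - (1 / 2) * (((f α) ^ 2 - (f (α - β)) ^ 2) / (Real.sin (β / 2)) ^ 2)) := by
    refine setIntegral_nonneg hSmeas fun β hβ => ?_
    have hne := hsne β (hSK hβ)
    have : f α * ((f α - f (α - β)) / (Real.sin (β / 2)) ^ 2)
        - (1 / 2) * (((f α) ^ 2 - (f (α - β)) ^ 2) / (Real.sin (β / 2)) ^ 2)
        = (f α - f (α - β)) ^ 2 / (2 * (Real.sin (β / 2)) ^ 2) := by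
      field_simp
      ring
    rw [this]
    positivity
  have heq : f α * ((1 / (4 * Real.pi)) * ∫ β in S,
        (f α - f (α - β)) / (Real.sin (β / 2)) ^ 2)
      - (1 / 2) * ((1 / (4 * Real.pi)) * ∫ β in S,
        ((f α) ^ 2 - (f (α - β)) ^ 2) / (Real.sin (β / 2)) ^ 2)
      = (1 / (4 * Real.pi)) * ∫ β in S,
        (f α * ((f α - f (α - β)) / (Real.sin (β / 2)) ^ 2)
          - (1 / 2) * (((f α) ^ 2 - (f (α - β)) ^ 2) / (Real.sin (β / 2)) ^ 2)) := by
    rw [integral_sub (hint1.const_mul (f α)) (hint2.const_mul (1 / 2)),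
      integral_const_mul, integral_const_mul]
    ring
  rw [heq]
  positivity
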